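/- arXiv:1404.0818 — 2 statements merged into one kernel-verified Lean document; each statement's English description precedes it below -/
import Mathlib

section
/- Let k be a positive integer and G a finite graph. If the treewidth of G is less than k, then the treewidth of the k-improved graph G^{(k)} equals the treewidth of G. -/
/-!
Common definitions: separations, stable separations, the improved graph,
external neighbourhoods, connected components, clique separations, and
rooted tree decompositions together with treewidth.
-/

section Defs

variable {V : Type} [Fintype V] [DecidableEq V]

/-- A separation of a graph `G`: a pair `(A, B)` covering the vertex set with no
edge between `A \ B` and `B \ A`.  Its order is `(A ∩ B).card`. -/
def IsSeparation (G : SimpleGraph V) (A B : Finset V) : Prop :=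
  A ∪ B = Finset.univ ∧ ∀ a ∈ A, a ∉ B → ∀ b ∈ B, b ∉ A → ¬G.Adj a b

/-- An `X`–`Y` separation: a separation `(A, B)` with `X ⊆ A` and `Y ⊆ B`. -/
def IsSepFor (G : SimpleGraph V) (X Y A B : Finset V) : Prop :=
  IsSeparation G A B ∧ X ⊆ A ∧ Y ⊆ B

/-- An `X`–`Y` separation of minimum possible order. -/
def IsMinSepFor (G : SimpleGraph V) (X Y A B : Finset V) : Prop :=
  IsSepFor G X Y A B ∧ ∀ A' B', IsSepFor G X Y A' B' → (A ∩ B).card ≤ (A' ∩ B').card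

/-- A separation `(A, B)` is `S`-stable if it is a minimum-order `S_L`–`S_R`
separation for some partition `(S_L, S_R)` of `S`. -/
def IsStable (G : SimpleGraph V) (S A B : Finset V) : Prop :=
  ∃ SL SR, Disjoint SL SR ∧ SL ∪ SR = S ∧ IsMinSepFor G SL SR A B

/-- `conn_G(x, y) < k`: there is a separation of order `< k` with `x ∈ A ∖ B` and
`y ∈ B ∖ A`.  (For adjacent `x, y` no such separation exists, i.e. `conn = +∞`.) -/
def ConnLt (G : SimpleGraph V) (x y : V) (k : ℕ) : Prop :=
  ∃ A B, IsSeparation G A B ∧ x ∈ A ∧ x ∉ B ∧ y ∈ B ∧ y ∉ A ∧ (A ∩ B).card < k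

/-- A graph is `k`-complemented when `conn(x,y) ≥ k` implies that `x` and `y` are
adjacent; equivalently, any two distinct nonadjacent vertices are separated by a
separation of order `< k`. -/
def KComplemented (G : SimpleGraph V) (k : ℕ) : Prop :=
  ∀ x y, x ≠ y → ¬G.Adj x y → ConnLt G x y k

lemma IsSeparation.symm2 {G : SimpleGraph V} {A B : Finset V} (h : IsSeparation G A B) :
    IsSeparation G B A :=
  ⟨by rw [Finset.union_comm]; exact h.1,
   fun a ha ha' b hb hb' hadj => h.2 b hb hb' a ha ha' hadj.symm⟩

/-- The `k`-improved graph `G^{(k)}`: same vertices, and `xy` is an edge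
iff `conn_G(x,y) ≥ k` (in particular all edges of `G` are kept). -/
def improvedGraph (G : SimpleGraph V) (k : ℕ) : SimpleGraph V where
  Adj x y := x ≠ y ∧ ¬ConnLt G x y k
  symm := by
    constructor
    rintro x y ⟨hxy, h⟩
    refine ⟨hxy.symm, ?_⟩
    rintro ⟨A, B, hsep, hy, hy', hx, hx', hc⟩
    exact h ⟨B, A, hsep.symm2, hx, hx', hy, hy', by rwa [Finset.inter_comm]⟩
  loopless := ⟨fun x h => h.1 rfl⟩

/-- The external neighbourhood `N_G(Z)`: vertices outside `Z` with a neighbour in `Z`. -/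
def extNbhd (G : SimpleGraph V) (Z : Set V) : Set V :=
  {v | v ∉ Z ∧ ∃ z ∈ Z, G.Adj v z}

/-- `Z` is the vertex set of a connected component of `G - X`: it is disjoint from `X`,
induces a connected subgraph, and all its neighbours outside itself lie in `X`. -/
def IsCompAway (G : SimpleGraph V) (X Z : Set V) : Prop :=
  Disjoint Z X ∧ (G.induce Z).Connected ∧
    ∀ ⦃v z : V⦄, z ∈ Z → G.Adj v z → v ∉ Z → v ∈ X

/-- The subgraph of `G` induced on `W` admits no clique separation: there is no
separation `(A, B)` of `G[W]` with `A ∖ B ≠ ∅`, `B ∖ A ≠ ∅` and `A ∩ B` a clique. -/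
def CliqueSepFreeOn (G : SimpleGraph V) (W : Finset V) : Prop :=
  ¬∃ A B : Finset V, A ∪ B = W ∧
      (∀ a ∈ A, a ∉ B → ∀ b ∈ B, b ∉ A → ¬G.Adj a b) ∧
      (A \ B).Nonempty ∧ (B \ A).Nonempty ∧ G.IsClique (↑(A ∩ B) : Set V)

/-- A rooted tree decomposition of the subgraph of `G` induced on `W`.
The rooted tree is given by a finite node type with a parent function
(every node reaches the root by iterating `parent`);
for every vertex of `W` the nodes whose bags contain it form a nonempty connected
subtree, and every edge of `G[W]` lies inside some bag. -/
structure RTDOn (V : Type) [Fintype V] [DecidableEq V] (G : SimpleGraph V) (W : Finset V) where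
  ι : Type
  instFintype : Fintype ι
  instDecEq : DecidableEq ι
  root : ι
  parent : ι → ι
  parent_root : parent root = root
  reaches_root : ∀ t, ∃ n, parent^[n] t = root
  bag : ι → Finset V
  bag_subset : ∀ t, bag t ⊆ W
  bags_connected : ∀ v ∈ W,
    ((SimpleGraph.fromRel fun s t => parent s = t).induce {t | v ∈ bag t}).Connected
  edge_in_bag : ∀ u ∈ W, ∀ v ∈ W, G.Adj u v → ∃ t, u ∈ bag t ∧ v ∈ bag t

/-- A rooted tree decomposition of `G`. -/
abbrev RTD (V : Type) [Fintype V] [DecidableEq V] (G : SimpleGraph V) : Type 1 :=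
  RTDOn V G Finset.univ

namespace RTDOn

variable {G : SimpleGraph V} {W : Finset V}

instance (D : RTDOn V G W) : Fintype D.ι := D.instFintype
instance (D : RTDOn V G W) : DecidableEq D.ι := D.instDecEq

/-- The decomposition has width at most `w`, i.e. all bags have size at most `w + 1`. -/
def widthLe (D : RTDOn V G W) (w : ℕ) : Prop := ∀ t, (D.bag t).card ≤ w + 1

/-- The decomposition has adhesion width at most `ℓ`: for every tree edge
`(t, parent t)` the intersection of the two bags has size at most `ℓ`. -/
def adhesionLe (D : RTDOn V G W) (l : ℕ) : Prop :=
  ∀ t, t ≠ D.root → (D.bag t ∩ D.bag (D.parent t)).card ≤ l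

/-- A family of potential bags captures a decomposition if every bag belongs to it. -/
def captures (D : RTDOn V G W) (ℬ : Finset (Finset V)) : Prop := ∀ t, D.bag t ∈ ℬ

/-- `γ(t)`: union of the bags at all descendants of `t`. -/
def gammaSet (D : RTDOn V G W) (t : D.ι) : Set V :=
  {v | ∃ s, (∃ n, D.parent^[n] s = t) ∧ v ∈ D.bag s}

/-- `σ(t)`: the adhesion of `t` with its parent (empty at the root). -/
def sigmaBag (D : RTDOn V G W) (t : D.ι) : Finset V :=
  if t = D.root then ∅ else D.bag t ∩ D.bag (D.parent t)

/-- `α(t) = γ(t) ∖ σ(t)`. -/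
def alphaSet (D : RTDOn V G W) (t : D.ι) : Set V := D.gammaSet t \ ↑(D.sigmaBag t)

end RTDOn

/-- A rooted tree decomposition is connectivity-sensitive when every `G[α(t)]`
is connected and `σ(t) = N_G(α(t))`. -/
def IsCSDecomp {G : SimpleGraph V} (D : RTD V G) : Prop :=
  ∀ t, (G.induce (D.alphaSet t)).Connected ∧ extNbhd G (D.alphaSet t) = ↑(D.sigmaBag t)

/-- The treewidth of `G`: the least `w` such that `G` has a (rooted) tree
decomposition of width at most `w`. -/
noncomputable def treewidth (G : SimpleGraph V) : ℕ :=
  sInf {w : ℕ | ∃ D : RTD V G, D.widthLe w}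

/-- `ℬ^{≤q}`: all sets of size at most `q` contained in some member of `ℬ`. -/
def belowFam (ℬ : Finset (Finset V)) (q : ℕ) : Finset (Finset V) :=
  Finset.univ.filter fun X => X.card ≤ q ∧ ∃ B ∈ ℬ, X ⊆ B

end Defs

/-!
Take a decomposition of `G` of width `tw(G) < k`; all its bags have at most `k` vertices.
If an edge `xy` of `G^{(k)}` lay in no bag, the subtrees of nodes whose bags contain `x`
and `y` would be disjoint, and cutting the tree just above the topmost node `t` of one of
them would give a separation of `G` separating `x` from `y` whose order is at most
`|β(t) ∖ {x}| < k`. So the same decomposition works for `G^{(k)}`, and `G ≤ G^{(k)}` gives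
the reverse inequality.
-/

variable {V : Type} [Fintype V] [DecidableEq V]

lemma ConnLt.symm {G : SimpleGraph V} {x y : V} {k : ℕ} (h : ConnLt G x y k) :
    ConnLt G y x k := by
  obtain ⟨A, B, hsep, hxA, hxB, hyB, hyA, hcard⟩ := h
  exact ⟨B, A, hsep.symm2, hyB, hyA, hxA, hxB, by rwa [Finset.inter_comm]⟩

lemma le_improvedGraph (G : SimpleGraph V) (k : ℕ) : G ≤ improvedGraph G k :=
  fun _ _ h => ⟨h.ne, fun ⟨_, _, hsep, hxA, hxB, hyB, hyA, _⟩ => hsep.2 _ hxA hxB _ hyB hyA h⟩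

namespace RTDOn

variable {G : SimpleGraph V} {W : Finset V} (D : RTDOn V G W)

/-- `s` lies in the subtree rooted at `t` (possibly `s = t`). -/
def IsDesc (s t : D.ι) : Prop := ∃ n, D.parent^[n] s = t

variable {D}

lemma IsDesc.refl (t : D.ι) : D.IsDesc t t := ⟨0, rfl⟩

lemma IsDesc.trans {s t u : D.ι} (hst : D.IsDesc s t) (htu : D.IsDesc t u) : D.IsDesc s u := by
  obtain ⟨n, rfl⟩ := hst
  obtain ⟨m, rfl⟩ := htu
  exact ⟨m + n, Function.iterate_add_apply _ _ _ _⟩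

lemma isDesc_root (t : D.ι) : D.IsDesc t D.root := D.reaches_root t

lemma IsDesc.parent_of_ne {s t : D.ι} (h : D.IsDesc s t) (hst : s ≠ t) :
    D.IsDesc (D.parent s) t := by
  obtain ⟨_ | n, hn⟩ := h
  · exact absurd hn hst
  · exact ⟨n, hn⟩

lemma eq_root_of_isPeriodicPt {n : ℕ} {t : D.ι} (hn : 0 < n)
    (ht : Function.IsPeriodicPt D.parent n t) : t = D.root := by
  obtain ⟨m, rfl⟩ : ∃ m, n = m + 1 := ⟨n - 1, by omega⟩
  obtain ⟨N, hN⟩ := D.reaches_root t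
  calc t = D.parent^[(m + 1) * N] t := (ht.mul_const N).symm
    _ = D.root := by
      rw [Nat.succ_mul, Function.iterate_add_apply, hN, Function.iterate_fixed D.parent_root]

lemma IsDesc.antisymm {s t : D.ι} (hst : D.IsDesc s t) (hts : D.IsDesc t s) : s = t := by
  obtain ⟨n, hn⟩ := hst
  obtain ⟨m, hm⟩ := hts
  rcases Nat.eq_zero_or_pos n with rfl | hpos
  · exact hn
  have hs : s = D.root := eq_root_of_isPeriodicPt (Nat.add_pos_right m hpos)
    (by rw [Function.IsPeriodicPt, Function.IsFixedPt, Function.iterate_add_apply, hn, hm])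
  subst hs
  rw [← hn, Function.iterate_fixed D.parent_root]

lemma mem_and_parent_mem_of_reachable {T : Set D.ι} {t : D.ι} {p q : T}
    (hpq : ((SimpleGraph.fromRel fun s t => D.parent s = t).induce T).Reachable p q)
    (hp : D.IsDesc p t) (hq : ¬ D.IsDesc q t) : t ∈ T ∧ D.parent t ∈ T := by
  obtain ⟨w⟩ := hpq
  obtain ⟨⟨⟨a, b⟩, hab⟩, -, ha, hb⟩ := w.exists_boundary_dart {u | D.IsDesc u t} hp hq
  simp only [SimpleGraph.comap_adj, Function.Embedding.subtype_apply,
    SimpleGraph.fromRel_adj] at hab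
  simp only [Set.mem_ofPred_eq] at ha hb
  rcases hab.2 with hba | hab
  · have hat : (a : D.ι) = t := by
      by_contra hne
      exact hb (hba ▸ ha.parent_of_ne hne)
    refine ⟨hat ▸ a.2, ?_⟩
    rw [← hat, hba]
    exact b.2
  · exact (hb (IsDesc.trans ⟨1, hab⟩ ha)).elim

lemma mem_bag_of_isDesc_of_not_isDesc {v : V} (hv : v ∈ W) {s s' t : D.ι}
    (hs : v ∈ D.bag s) (hs' : v ∈ D.bag s') (hst : D.IsDesc s t) (hst' : ¬ D.IsDesc s' t) :
    v ∈ D.bag t ∧ v ∈ D.bag (D.parent t) :=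
  mem_and_parent_mem_of_reachable (p := ⟨s, hs⟩) (q := ⟨s', hs'⟩)
    ((D.bags_connected v hv).preconnected _ _) hst hst'

lemma exists_top (T : Set D.ι) {s : D.ι} (hs : s ∈ T) :
    ∃ r ∈ T, r = D.root ∨ D.parent r ∉ T := by
  by_contra! h
  have hiter : ∀ n, D.parent^[n] s ∈ T := by
    intro n
    induction n with
    | zero => exact hs
    | succ n ih => rw [Function.iterate_succ_apply']; exact (h _ ih).2
  obtain ⟨N, hN⟩ := D.reaches_root s
  exact (h _ (hiter N)).1 hN

lemma exists_mem_bag {v : V} (hv : v ∈ W) : ∃ t, v ∈ D.bag t :=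
  let ⟨⟨t, ht⟩⟩ := (D.bags_connected v hv).nonempty
  ⟨t, ht⟩

lemma isDesc_of_top {v : V} (hv : v ∈ W) {r s : D.ι} (hr : v ∈ D.bag r)
    (htop : r = D.root ∨ v ∉ D.bag (D.parent r)) (hs : v ∈ D.bag s) : D.IsDesc s r := by
  by_contra hsr
  rcases htop with rfl | htop
  · exact hsr (isDesc_root s)
  · exact htop (mem_bag_of_isDesc_of_not_isDesc hv hr hs (IsDesc.refl r) hsr).2

variable (D)

def withGraph (H : SimpleGraph V)
    (h : ∀ u ∈ W, ∀ v ∈ W, H.Adj u v → ∃ t, u ∈ D.bag t ∧ v ∈ D.bag t) : RTDOn V H W :=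
  { D with edge_in_bag := h }

variable (G W)

def single : RTDOn V G W where
  ι := Unit
  instFintype := inferInstance
  instDecEq := inferInstance
  root := ()
  parent := id
  parent_root := rfl
  reaches_root _ := ⟨0, rfl⟩
  bag _ := W
  bag_subset _ := Finset.Subset.refl _
  bags_connected _ hv :=
    have : Nonempty {t : Unit | _ ∈ W} := ⟨⟨(), hv⟩⟩
    ⟨fun a b => by rw [Subsingleton.elim a b]⟩
  edge_in_bag u hu v hv _ := ⟨(), hu, hv⟩

section Cut

variable {G : SimpleGraph V} {W : Finset V} (D : RTDOn V G W) (t : D.ι)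

open Classical in
noncomputable def bagsBelow : Finset V := (Finset.univ.filter (D.IsDesc · t)).biUnion D.bag

open Classical in
noncomputable def bagsNotBelow : Finset V :=
  (Finset.univ.filter (¬ D.IsDesc · t)).biUnion D.bag

variable {D t}

lemma mem_bagsBelow {v : V} : v ∈ D.bagsBelow t ↔ ∃ s, D.IsDesc s t ∧ v ∈ D.bag s := by
  simp [bagsBelow]

lemma mem_bagsNotBelow {v : V} : v ∈ D.bagsNotBelow t ↔ ∃ s, ¬ D.IsDesc s t ∧ v ∈ D.bag s := by
  simp [bagsNotBelow]

lemma bagsBelow_inter_bagsNotBelow_subset :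
    D.bagsBelow t ∩ D.bagsNotBelow t ⊆ D.bag t ∩ D.bag (D.parent t) := by
  intro v hv
  obtain ⟨⟨s, hst, hvs⟩, s', hs't, hvs'⟩ :=
    And.imp mem_bagsBelow.1 mem_bagsNotBelow.1 (Finset.mem_inter.1 hv)
  exact Finset.mem_inter.2
    (mem_bag_of_isDesc_of_not_isDesc (D.bag_subset s hvs) hvs hvs' hst hs't)

end Cut

lemma isSeparation_bagsBelow_bagsNotBelow {G : SimpleGraph V} (D : RTD V G) (t : D.ι) :
    IsSeparation G (D.bagsBelow t) (D.bagsNotBelow t) := by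
  refine ⟨Finset.eq_univ_of_forall fun v => ?_, fun a _ haB b _ hbA hab => ?_⟩
  · obtain ⟨s, hs⟩ := D.exists_mem_bag (Finset.mem_univ v)
    by_cases hst : D.IsDesc s t
    · exact Finset.mem_union_left _ (mem_bagsBelow.2 ⟨s, hst, hs⟩)
    · exact Finset.mem_union_right _ (mem_bagsNotBelow.2 ⟨s, hst, hs⟩)
  · obtain ⟨s, has, hbs⟩ := D.edge_in_bag a (Finset.mem_univ a) b (Finset.mem_univ b) hab
    by_cases hst : D.IsDesc s t
    · exact hbA (mem_bagsBelow.2 ⟨s, hst, hbs⟩)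
    · exact haB (mem_bagsNotBelow.2 ⟨s, hst, has⟩)

lemma connLt_of_top {G : SimpleGraph V} (D : RTD V G) {k : ℕ}
    (hbag : ∀ t, (D.bag t).card ≤ k) {x y : V} {t : D.ι} (hx : x ∈ D.bag t)
    (htop : t = D.root ∨ x ∉ D.bag (D.parent t)) (hy : ∀ s, y ∈ D.bag s → ¬ D.IsDesc s t) :
    ConnLt G x y k := by
  obtain ⟨sy, hsy⟩ := D.exists_mem_bag (Finset.mem_univ y)
  have hxp : x ∉ D.bag (D.parent t) := by
    rcases htop with rfl | htop
    · exact absurd (isDesc_root sy) (hy sy hsy)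
    · exact htop
  refine ⟨_, _, D.isSeparation_bagsBelow_bagsNotBelow t, mem_bagsBelow.2 ⟨t, .refl t, hx⟩,
    fun hxB => ?_, mem_bagsNotBelow.2 ⟨sy, hy sy hsy, hsy⟩, fun hyA => ?_, ?_⟩
  · obtain ⟨s, hst, hxs⟩ := mem_bagsNotBelow.1 hxB
    exact hst (isDesc_of_top (Finset.mem_univ x) hx htop hxs)
  · obtain ⟨s, hst, hys⟩ := mem_bagsBelow.1 hyA
    exact hy s hys hst
  · calc _ ≤ (D.bag t ∩ D.bag (D.parent t)).card :=
          Finset.card_le_card bagsBelow_inter_bagsNotBelow_subset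
      _ < (D.bag t).card :=
          Finset.card_lt_card (Finset.ssubset_iff_subset_ne.2 ⟨Finset.inter_subset_left,
            fun h => hxp (Finset.mem_of_mem_inter_right (h ▸ hx))⟩)
      _ ≤ k := hbag t

lemma exists_bag_of_improvedGraph_adj {G : SimpleGraph V} (D : RTD V G) {k : ℕ}
    (hbag : ∀ t, (D.bag t).card ≤ k) {x y : V} (hxy : (improvedGraph G k).Adj x y) :
    ∃ t, x ∈ D.bag t ∧ y ∈ D.bag t := by
  by_contra! hnc
  refine hxy.2 ?_
  obtain ⟨rx, hrx, htopx⟩ := D.exists_top {t | x ∈ D.bag t}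
    (D.exists_mem_bag (Finset.mem_univ x)).choose_spec
  obtain ⟨ry, hry, htopy⟩ := D.exists_top {t | y ∈ D.bag t}
    (D.exists_mem_bag (Finset.mem_univ y)).choose_spec
  by_cases hyx : ∀ s, y ∈ D.bag s → ¬ D.IsDesc s rx
  · exact D.connLt_of_top hbag hrx htopx hyx
  by_cases hxy : ∀ s, x ∈ D.bag s → ¬ D.IsDesc s ry
  · exact (D.connLt_of_top hbag hry htopy hxy).symm
  push Not at hyx hxy
  obtain ⟨s, hys, hsrx⟩ := hyx
  obtain ⟨s', hxs', hs'ry⟩ := hxy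
  have hryrx : D.IsDesc ry rx := by
    by_contra h
    exact hnc rx hrx (mem_bag_of_isDesc_of_not_isDesc (Finset.mem_univ y) hys hry hsrx h).1
  have hrxry : D.IsDesc rx ry := by
    by_contra h
    exact hnc ry (mem_bag_of_isDesc_of_not_isDesc (Finset.mem_univ x) hxs' hrx hs'ry h).1 hry
  exact (hnc rx hrx (hrxry.antisymm hryrx ▸ hry)).elim

end RTDOn

lemma treewidth_le_of_widthLe {G : SimpleGraph V} (D : RTD V G) {w : ℕ} (h : D.widthLe w) :
    treewidth G ≤ w :=
  Nat.sInf_le ⟨D, h⟩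

lemma exists_widthLe_treewidth (G : SimpleGraph V) : ∃ D : RTD V G, D.widthLe (treewidth G) :=
  Nat.sInf_mem (s := {w | ∃ D : RTD V G, D.widthLe w})
    ⟨Fintype.card V, RTDOn.single G _, fun _ => Nat.le_succ _⟩

lemma treewidth_mono {G H : SimpleGraph V} (hGH : G ≤ H) : treewidth G ≤ treewidth H :=
  let ⟨E, hE⟩ := exists_widthLe_treewidth H
  treewidth_le_of_widthLe
    (E.withGraph G fun u hu v hv huv => E.edge_in_bag u hu v hv (hGH huv)) hE

theorem stmt10_general {V : Type} [Fintype V] [DecidableEq V] (k : ℕ)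
    (G : SimpleGraph V) (htw : treewidth G < k) :
    treewidth (improvedGraph G k) = treewidth G := by
  obtain ⟨D, hD⟩ := exists_widthLe_treewidth G
  have hbag : ∀ t, (D.bag t).card ≤ k := fun t => (hD t).trans htw
  refine le_antisymm ?_ (treewidth_mono (le_improvedGraph G k))
  exact treewidth_le_of_widthLe
    (D.withGraph _ fun _ _ _ _ huv => D.exists_bag_of_improvedGraph_adj hbag huv) hD

/-- If `tw(G) < k`, then the treewidth of `G^{(k)}` equals the treewidth
of `G`. -/
theorem stmt10 {V : Type} [Fintype V] [DecidableEq V] (k : ℕ) (hk : 0 < k)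
    (G : SimpleGraph V) (htw : treewidth G < k) :
    treewidth (improvedGraph G k) = treewidth G :=
  stmt10_general k G htw
end

section
/- Let G be a finite graph and let (T*,β*) be a rooted tree decomposition of G such that every adhesion σ*(t) = β*(t) ∩ β*(parent(t)) is a clique in G, and every adhesion has size at most a. Suppose that for every node t of T*, the induced subgraph G[β*(t)] admits a rooted tree decomposition of width at most w and adhesion width at most ℓ, where a ≤ ℓ. Then G admits a rooted tree decomposition of width at most w and adhesion width at most ℓ, each of whose bags is a bag of one of the given per-node decompositions. -/
/-!
Reroot each local decomposition `Dloc t` at a bag containing the clique `σ*(t)` (it exists by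
the Helly property of subtrees of a tree) and hang it below a bag of `Dloc (parent t)` that
also contains `σ*(t)`. The bags of the glued decomposition are local bags, and a new tree edge
either is a local tree edge or joins subsets of `β*(t)` and `β*(parent t)`, so its adhesion is
at most `a ≤ ℓ`. The occurrences of a vertex are connected inside each local decomposition,
and along every edge of its subtree in `T*` they are linked through `σ*(t)`.
-/

section ParentTree

variable {ι : Type*} {parent : ι → ι} {root : ι}

def IsParentTree (parent : ι → ι) (root : ι) : Prop :=
  parent root = root ∧ ∀ t, ∃ n, parent^[n] t = root

def parentGraph (parent : ι → ι) : SimpleGraph ι :=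
  SimpleGraph.fromRel fun s t => parent s = t

lemma parentGraph_adj {s t : ι} :
    (parentGraph parent).Adj s t ↔ s ≠ t ∧ (parent s = t ∨ parent t = s) :=
  SimpleGraph.fromRel_adj _ _ _

namespace IsParentTree

lemma eq_root_of_parent_eq_self (h : IsParentTree parent root) {t : ι} (ht : parent t = t) :
    t = root := by
  obtain ⟨n, hn⟩ := h.2 t
  rwa [Function.iterate_fixed ht] at hn

lemma parent_ne_self (h : IsParentTree parent root) {t : ι} (ht : t ≠ root) : parent t ≠ t :=
  fun h' => ht (h.eq_root_of_parent_eq_self h')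

lemma ne_root_of_parent_eq (h : IsParentTree parent root) {s t : ι} (hst : s ≠ t)
    (hp : parent s = t) : s ≠ root := by
  rintro rfl
  exact hst (h.1.symm.trans hp)

open Classical in
noncomputable def depth (h : IsParentTree parent root) (t : ι) : ℕ :=
  Nat.find (h.2 t)

lemma depth_parent (h : IsParentTree parent root) {t : ι} (ht : t ≠ root) :
    h.depth t = h.depth (parent t) + 1 := by
  classical
  have hspec : ∀ s, parent^[h.depth s] s = root := fun s => Nat.find_spec (h.2 s)
  have hpos : h.depth t ≠ 0 := fun h0 => ht (by simpa [h0] using hspec t)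
  have hle : h.depth t ≤ h.depth (parent t) + 1 :=
    Nat.find_le (by rw [Function.iterate_succ_apply]; exact hspec (parent t))
  have hge : h.depth (parent t) ≤ h.depth t - 1 :=
    Nat.find_le (by
      have := hspec t
      rwa [← Nat.sub_add_cancel (Nat.one_le_iff_ne_zero.mpr hpos), Function.iterate_succ_apply]
        at this)
  omega

/-- Making the child `r` of the root the new root only reverses the edge between them. -/
lemma exists_flip (h : IsParentTree parent root) {r : ι} (hr : parent r = root) :
    ∃ p, IsParentTree p r ∧ parentGraph p = parentGraph parent := by
  classical
  set p : ι → ι := fun t => if t = r ∨ t = root then r else parent t with hp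
  have hreach : ∀ n t, parent^[n] t = root → ∃ m, p^[m] t = r := by
    intro n
    induction n with
    | zero => rintro t rfl; exact ⟨1, by simp [hp]⟩
    | succ n ih =>
      intro t ht
      by_cases htr : t = r ∨ t = root
      · exact ⟨1, by simp [hp, htr]⟩
      · obtain ⟨m, hm⟩ := ih (parent t) (by rwa [← Function.iterate_succ_apply])
        have hpt : p t = parent t := if_neg htr
        exact ⟨m + 1, by rw [Function.iterate_succ_apply, hpt, hm]⟩
  refine ⟨p, ⟨by simp [hp], fun t => (h.2 t).elim (hreach · t)⟩, ?_⟩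
  ext x y
  simp only [parentGraph_adj, hp]
  have hroot := h.1
  constructor <;> rintro ⟨hxy, hxy'⟩ <;> refine ⟨hxy, ?_⟩ <;> split_ifs at * <;> grind

lemma exists_reroot (h : IsParentTree parent root) (r : ι) :
    ∃ p, IsParentTree p r ∧ parentGraph p = parentGraph parent := by
  obtain ⟨n, hn⟩ := h.2 r
  induction n generalizing r with
  | zero => subst hn; exact ⟨parent, h, rfl⟩
  | succ n ih =>
    obtain ⟨p, hp, hpg⟩ := ih (parent r) (by rwa [← Function.iterate_succ_apply])
    by_cases hr : r = parent r
    · exact ⟨p, hr ▸ hp, hpg⟩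
    have hadj : (parentGraph p).Adj r (parent r) := by
      rw [hpg, parentGraph_adj]
      exact ⟨hr, Or.inl rfl⟩
    have hpr : p r = parent r := by
      rcases (parentGraph_adj.mp hadj).2 with h' | h'
      · exact h'
      · exact absurd (h'.symm.trans hp.1) hr
    obtain ⟨p', hp', hp'g⟩ := hp.exists_flip hpr
    exact ⟨p', hp', hp'g.trans hpg⟩

lemma iterate_mem_of_reachable (h : IsParentTree parent root) {S : Set ι} {m x : ι}
    (hm : m ∈ S) (hmin : ∀ z ∈ S, h.depth m ≤ h.depth z) (hx : x ∈ S)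
    (hxm : ((parentGraph parent).induce S).Reachable ⟨x, hx⟩ ⟨m, hm⟩) :
    parent^[h.depth x - h.depth m] x = m ∧ ∀ k ≤ h.depth x - h.depth m, parent^[k] x ∈ S := by
  obtain ⟨q⟩ := hxm
  suffices H : ∀ (a b : S) (_ : ((parentGraph parent).induce S).Walk a b), b.1 = m →
      parent^[h.depth a - h.depth m] a = m ∧ ∀ k ≤ h.depth a - h.depth m, parent^[k] a ∈ S from
    H _ _ q rfl
  intro a b q hb
  induction q with
  | nil =>
    subst hb
    refine ⟨by simp, fun k hk => ?_⟩
    obtain rfl : k = 0 := by omega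
    exact Subtype.prop _
  | @cons u c b huc q ih =>
    obtain ⟨ihm, ihS⟩ := ih hb
    have hu := hmin u u.2
    have hc := hmin c c.2
    obtain ⟨hne, hpc | hpc⟩ := parentGraph_adj.mp (SimpleGraph.induce_adj.mp huc)
    · have hdu := h.depth_parent (h.ne_root_of_parent_eq hne hpc)
      rw [hpc] at hdu
      have hk : h.depth u - h.depth m = h.depth c - h.depth m + 1 := by omega
      refine ⟨by rw [hk, Function.iterate_succ_apply, hpc, ihm], fun k hk' => ?_⟩
      rcases k with _ | k
      · exact u.2
      · rw [Function.iterate_succ_apply, hpc]; exact ihS k (by omega)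
    · have hdc := h.depth_parent (h.ne_root_of_parent_eq (Ne.symm hne) hpc)
      rw [hpc] at hdc
      have hk : h.depth c - h.depth m = h.depth u - h.depth m + 1 := by omega
      have hshift : ∀ k, parent^[k] u = parent^[k + 1] c := fun k => by
        rw [Function.iterate_succ_apply, hpc]
      refine ⟨by rw [hshift, ← hk, ihm], fun k hk' => ?_⟩
      rw [hshift]; exact ihS (k + 1) (by omega)

end IsParentTree

end ParentTree

namespace RTDOn

variable {V : Type} [Fintype V] [DecidableEq V] {G : SimpleGraph V} {W : Finset V}

lemma isParentTree (D : RTDOn V G W) : IsParentTree D.parent D.root :=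
  ⟨D.parent_root, D.reaches_root⟩

lemma sigmaBag_of_ne_root (D : RTDOn V G W) {t : D.ι} (ht : t ≠ D.root) :
    D.sigmaBag t = D.bag t ∩ D.bag (D.parent t) :=
  if_neg ht

lemma sigmaBag_subset_bag (D : RTDOn V G W) (t : D.ι) : D.sigmaBag t ⊆ D.bag t := by
  unfold sigmaBag; split_ifs
  · exact Finset.empty_subset _
  · exact Finset.inter_subset_left

lemma sigmaBag_subset_bag_parent (D : RTDOn V G W) (t : D.ι) :
    D.sigmaBag t ⊆ D.bag (D.parent t) := by
  unfold sigmaBag; split_ifs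
  · exact Finset.empty_subset _
  · exact Finset.inter_subset_right

lemma exists_mem_bag_min_depth (D : RTDOn V G W) {v : V} (hv : v ∈ W) :
    ∃ m, v ∈ D.bag m ∧ ∀ z, v ∈ D.bag z → D.isParentTree.depth m ≤ D.isParentTree.depth z := by
  obtain ⟨⟨s, hs⟩⟩ := (D.bags_connected v hv).nonempty
  obtain ⟨m, hm, hmin⟩ := (Finset.univ.filter fun s => v ∈ D.bag s).exists_min_image
    D.isParentTree.depth ⟨s, by simpa using hs⟩
  exact ⟨m, by simpa using hm, fun z hz => hmin z (by simpa using hz)⟩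

/-- `mv` lies on the path from `x` up to `mu`, all of whose bags contain `u`. -/
lemma mem_bag_of_min_depth_le (D : RTDOn V G W) {u v : V} (hu : u ∈ W) (hv : v ∈ W)
    {mu mv x : D.ι} (hmu : u ∈ D.bag mu)
    (hmu' : ∀ z, u ∈ D.bag z → D.isParentTree.depth mu ≤ D.isParentTree.depth z)
    (hmv : v ∈ D.bag mv)
    (hmv' : ∀ z, v ∈ D.bag z → D.isParentTree.depth mv ≤ D.isParentTree.depth z)
    (hle : D.isParentTree.depth mu ≤ D.isParentTree.depth mv)
    (hxu : u ∈ D.bag x) (hxv : v ∈ D.bag x) : u ∈ D.bag mv := by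
  have hpathu := D.isParentTree.iterate_mem_of_reachable hmu hmu' hxu
    ((D.bags_connected u hu).preconnected _ _)
  have hpathv := D.isParentTree.iterate_mem_of_reachable hmv hmv' hxv
    ((D.bags_connected v hv).preconnected _ _)
  rw [← hpathv.1]
  exact hpathu.2 _ (Nat.sub_le_sub_left hle _)

lemma exists_bag_superset_of_isClique (D : RTDOn V G W) {K : Finset V} (hKW : K ⊆ W)
    (hK : G.IsClique (K : Set V)) : ∃ s, K ⊆ D.bag s := by
  rcases K.eq_empty_or_nonempty with rfl | hne
  · exact ⟨D.root, Finset.empty_subset _⟩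
  have : Nonempty D.ι := ⟨D.root⟩
  choose! top htop htop' using fun v (hv : v ∈ W) => D.exists_mem_bag_min_depth hv
  obtain ⟨v₀, hv₀, hmax⟩ := K.exists_max_image (fun v => D.isParentTree.depth (top v)) hne
  refine ⟨top v₀, fun v hv => ?_⟩
  rcases eq_or_ne v v₀ with rfl | hvv₀
  · exact htop v (hKW hv)
  obtain ⟨x, hxv, hxv₀⟩ := D.edge_in_bag v (hKW hv) v₀ (hKW hv₀) (hK hv hv₀ hvv₀)
  exact D.mem_bag_of_min_depth_le (hKW hv) (hKW hv₀) (htop v (hKW hv)) (htop' v (hKW hv))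
    (htop v₀ (hKW hv₀)) (htop' v₀ (hKW hv₀)) (hmax v hv) hxv hxv₀

noncomputable def rerootAt (D : RTDOn V G W) (r : D.ι) : RTDOn V G W :=
  have h := D.isParentTree.exists_reroot r
  { D with
    root := r
    parent := h.choose
    parent_root := h.choose_spec.1.1
    reaches_root := h.choose_spec.1.2
    bags_connected := fun v hv => by
      change ((parentGraph h.choose).induce _).Connected
      rw [h.choose_spec.2]
      exact D.bags_connected v hv }

lemma parentGraph_rerootAt (D : RTDOn V G W) (r : D.ι) :
    parentGraph (D.rerootAt r).parent = parentGraph D.parent :=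
  (D.isParentTree.exists_reroot r).choose_spec.2

lemma adhesionLe.rerootAt {D : RTDOn V G W} {l : ℕ} (hD : D.adhesionLe l) (r : D.ι) :
    (D.rerootAt r).adhesionLe l := by
  intro t ht
  set p := (D.rerootAt r).parent
  have hne : t ≠ p t := ((D.rerootAt r).isParentTree.parent_ne_self ht).symm
  have hadj : (parentGraph D.parent).Adj t (p t) := by
    rw [← D.parentGraph_rerootAt r]
    exact parentGraph_adj.mpr ⟨hne, Or.inl rfl⟩
  rcases (parentGraph_adj.mp hadj).2 with hpt | hpt
  · have := hD t (D.isParentTree.ne_root_of_parent_eq hne hpt)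
    rwa [hpt] at this
  · have := hD (p t) (D.isParentTree.ne_root_of_parent_eq hne.symm hpt)
    rwa [hpt, Finset.inter_comm] at this

end RTDOn

lemma SimpleGraph.preconnected_of_reachable_fibers {X Y : Type*} {H : SimpleGraph X}
    {K : SimpleGraph Y} (hK : K.Preconnected) (π : X → Y)
    (hfib : ∀ x x', π x = π x' → H.Reachable x x')
    (hedge : ∀ y y', K.Adj y y' → ∃ x x', π x = y ∧ π x' = y' ∧ H.Reachable x x') :
    H.Preconnected := by
  suffices h : ∀ y y' (_ : K.Walk y y') x x', π x = y → π x' = y' → H.Reachable x x' from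
    fun x x' => (hK (π x) (π x')).elim fun q => h _ _ q x x' rfl rfl
  intro y y' q
  induction q with
  | nil => exact fun x x' hx hx' => hfib x x' (hx.trans hx'.symm)
  | cons hadj _ ih =>
    intro x x' hx hx'
    obtain ⟨z, z', hz, hz', hzz'⟩ := hedge _ _ hadj
    exact ((hfib x z (hx.trans hz.symm)).trans hzz').trans (ih z' x' hz' hx')

namespace RTDOn

variable {V : Type} [Fintype V] [DecidableEq V] {G : SimpleGraph V}
  (Dstar : RTD V G) (E : ∀ t, RTDOn V G (Dstar.bag t)) (up : ∀ t, (E (Dstar.parent t)).ι)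

def gluedParent (x : Σ t, (E t).ι) : Σ t, (E t).ι :=
  if x.2 = (E x.1).root ∧ x.1 ≠ Dstar.root then ⟨Dstar.parent x.1, up x.1⟩
  else ⟨x.1, (E x.1).parent x.2⟩

variable {Dstar E up}

lemma gluedParent_of_ne_root {t : Dstar.ι} {s : (E t).ι} (hs : s ≠ (E t).root) :
    gluedParent Dstar E up ⟨t, s⟩ = ⟨t, (E t).parent s⟩ :=
  if_neg fun h => hs h.1

lemma gluedParent_root_of_ne_root {t : Dstar.ι} (ht : t ≠ Dstar.root) :
    gluedParent Dstar E up ⟨t, (E t).root⟩ = ⟨Dstar.parent t, up t⟩ :=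
  if_pos ⟨rfl, ht⟩

lemma gluedParent_root :
    gluedParent Dstar E up ⟨Dstar.root, (E Dstar.root).root⟩ =
      ⟨Dstar.root, (E Dstar.root).root⟩ := by
  simp [gluedParent, (E Dstar.root).parent_root]

lemma exists_iterate_gluedParent_eq_local_root (t : Dstar.ι) (s : (E t).ι) :
    ∃ k, (gluedParent Dstar E up)^[k] ⟨t, s⟩ = ⟨t, (E t).root⟩ := by
  obtain ⟨n, hn⟩ := (E t).reaches_root s
  induction n generalizing s with
  | zero => exact ⟨0, by rw [← hn]; rfl⟩
  | succ n ih =>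
    by_cases hs : s = (E t).root
    · exact ⟨0, by rw [hs]; rfl⟩
    obtain ⟨k, hk⟩ := ih ((E t).parent s) (by rwa [← Function.iterate_succ_apply])
    exact ⟨k + 1, by rw [Function.iterate_succ_apply, gluedParent_of_ne_root hs, hk]⟩

lemma exists_iterate_gluedParent_local_root_eq_root (t : Dstar.ι) :
    ∃ k, (gluedParent Dstar E up)^[k] ⟨t, (E t).root⟩ = ⟨Dstar.root, (E Dstar.root).root⟩ := by
  obtain ⟨n, hn⟩ := Dstar.reaches_root t
  induction n generalizing t with
  | zero => exact ⟨0, by subst hn; rfl⟩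
  | succ n ih =>
    by_cases ht : t = Dstar.root
    · exact ⟨0, by subst ht; rfl⟩
    obtain ⟨k₁, hk₁⟩ := exists_iterate_gluedParent_eq_local_root (up := up) _ (up t)
    obtain ⟨k₂, hk₂⟩ := ih (Dstar.parent t) (by rwa [← Function.iterate_succ_apply])
    exact ⟨k₂ + (k₁ + 1), by
      rw [Function.iterate_add_apply, Function.iterate_succ_apply,
        gluedParent_root_of_ne_root ht, hk₁, hk₂]⟩

lemma isParentTree_gluedParent :
    IsParentTree (gluedParent Dstar E up) ⟨Dstar.root, (E Dstar.root).root⟩ := by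
  refine ⟨gluedParent_root, fun ⟨t, s⟩ => ?_⟩
  obtain ⟨k₁, hk₁⟩ := exists_iterate_gluedParent_eq_local_root (up := up) t s
  obtain ⟨k₂, hk₂⟩ := exists_iterate_gluedParent_local_root_eq_root (up := up) t
  exact ⟨k₂ + k₁, by rw [Function.iterate_add_apply, hk₁, hk₂]⟩

lemma parentGraph_gluedParent_adj {t : Dstar.ι} {s s' : (E t).ι}
    (h : (parentGraph (E t).parent).Adj s s') :
    (parentGraph (gluedParent Dstar E up)).Adj ⟨t, s⟩ ⟨t, s'⟩ := by
  obtain ⟨hne, hss' | hss'⟩ := parentGraph_adj.mp h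
  · refine parentGraph_adj.mpr ⟨fun h' => hne (eq_of_heq (Sigma.mk.inj h').2), Or.inl ?_⟩
    rw [gluedParent_of_ne_root ((E t).isParentTree.ne_root_of_parent_eq hne hss'), hss']
  · refine parentGraph_adj.mpr ⟨fun h' => hne (eq_of_heq (Sigma.mk.inj h').2), Or.inr ?_⟩
    rw [gluedParent_of_ne_root ((E t).isParentTree.ne_root_of_parent_eq hne.symm hss'), hss']

lemma bags_connected_gluedParent (hroot : ∀ t, Dstar.sigmaBag t ⊆ (E t).bag (E t).root)
    (hup : ∀ t, Dstar.sigmaBag t ⊆ (E (Dstar.parent t)).bag (up t)) (v : V) :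
    ((parentGraph (gluedParent Dstar E up)).induce {x | v ∈ (E x.1).bag x.2}).Connected := by
  set H := (parentGraph (gluedParent Dstar E up)).induce {x | v ∈ (E x.1).bag x.2}
  have hlocal : ∀ t (s s' : (E t).ι) (hs : v ∈ (E t).bag s) (hs' : v ∈ (E t).bag s'),
      H.Reachable ⟨⟨t, s⟩, hs⟩ ⟨⟨t, s'⟩, hs'⟩ := fun t s s' hs hs' =>
    ((E t).bags_connected v ((E t).bag_subset s hs) |>.preconnected ⟨s, hs⟩ ⟨s', hs'⟩).map
      (⟨fun s => ⟨⟨t, s.1⟩, s.2⟩, fun h => parentGraph_gluedParent_adj h⟩ :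
        (parentGraph (E t).parent).induce {s | v ∈ (E t).bag s} →g H)
  have hcross : ∀ t (ht : t ≠ Dstar.parent t) (hvt : v ∈ Dstar.bag t)
      (hvp : v ∈ Dstar.bag (Dstar.parent t)),
      ∃ (hr : v ∈ (E t).bag (E t).root) (hu : v ∈ (E (Dstar.parent t)).bag (up t)),
        H.Adj ⟨⟨t, (E t).root⟩, hr⟩ ⟨⟨Dstar.parent t, up t⟩, hu⟩ := by
    intro t ht hvt hvp
    have htr := Dstar.isParentTree.ne_root_of_parent_eq ht rfl
    have hvσ : v ∈ Dstar.sigmaBag t := by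
      rw [sigmaBag_of_ne_root _ htr]; exact Finset.mem_inter.mpr ⟨hvt, hvp⟩
    refine ⟨hroot t hvσ, hup t hvσ,
      parentGraph_adj.mpr ⟨fun h => ht (congrArg Sigma.fst h), Or.inl ?_⟩⟩
    exact gluedParent_root_of_ne_root htr
  refine SimpleGraph.connected_iff _ |>.mpr ⟨SimpleGraph.preconnected_of_reachable_fibers
    (Dstar.bags_connected v (Finset.mem_univ v)).preconnected
    (fun x => ⟨x.1.1, (E x.1.1).bag_subset x.1.2 x.2⟩) ?_ ?_, ?_⟩
  · rintro ⟨⟨t, s⟩, hs⟩ ⟨⟨t', s'⟩, hs'⟩ h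
    obtain rfl : t = t' := congrArg Subtype.val h
    exact hlocal t s s' hs hs'
  · rintro ⟨t, ht⟩ ⟨t', ht'⟩ hadj
    obtain ⟨hne, rfl | rfl⟩ := parentGraph_adj.mp (SimpleGraph.induce_adj.mp hadj)
    · obtain ⟨hr, hu, h⟩ := hcross t hne ht ht'
      exact ⟨_, _, rfl, rfl, h.reachable⟩
    · obtain ⟨hr, hu, h⟩ := hcross t' (Ne.symm hne) ht' ht
      exact ⟨_, _, rfl, rfl, h.reachable.symm⟩
  · obtain ⟨⟨t, ht⟩⟩ := (Dstar.bags_connected v (Finset.mem_univ v)).nonempty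
    obtain ⟨⟨s, hs⟩⟩ := ((E t).bags_connected v ht).nonempty
    exact ⟨⟨⟨t, s⟩, hs⟩⟩

variable (hroot : ∀ t, Dstar.sigmaBag t ⊆ (E t).bag (E t).root)
  (hup : ∀ t, Dstar.sigmaBag t ⊆ (E (Dstar.parent t)).bag (up t))

def glue : RTD V G where
  ι := Σ t, (E t).ι
  instFintype := inferInstance
  instDecEq := inferInstance
  root := ⟨Dstar.root, (E Dstar.root).root⟩
  parent := gluedParent Dstar E up
  parent_root := isParentTree_gluedParent.1
  reaches_root := isParentTree_gluedParent.2
  bag x := (E x.1).bag x.2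
  bag_subset _ := Finset.subset_univ _
  bags_connected v _ := bags_connected_gluedParent hroot hup v
  edge_in_bag u _ v _ huv := by
    obtain ⟨t, hut, hvt⟩ := Dstar.edge_in_bag u (Finset.mem_univ u) v (Finset.mem_univ v) huv
    obtain ⟨s, hus, hvs⟩ := (E t).edge_in_bag u hut v hvt huv
    exact ⟨⟨t, s⟩, hus, hvs⟩

lemma adhesionLe_glue {l : ℕ} (hadh : Dstar.adhesionLe l) (hE : ∀ t, (E t).adhesionLe l) :
    (glue hroot hup).adhesionLe l := by
  rintro ⟨t, s⟩ hx
  change ((E t).bag s ∩ (E (gluedParent Dstar E up ⟨t, s⟩).1).bag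
    (gluedParent Dstar E up ⟨t, s⟩).2).card ≤ l
  by_cases hs : s = (E t).root
  · subst hs
    have ht : t ≠ Dstar.root := fun h => hx (by subst h; rfl)
    rw [gluedParent_root_of_ne_root ht]
    exact (Finset.card_le_card (Finset.inter_subset_inter ((E t).bag_subset _)
      ((E _).bag_subset _))).trans (hadh t ht)
  · rw [gluedParent_of_ne_root hs]
    exact hE t s hs

end RTDOn

/-- Given a rooted tree decomposition `D*` of `G` whose adhesions are
cliques of size at most `a ≤ ℓ`, and for each node `t` a rooted tree decomposition of
`G[β*(t)]` of width at most `w` and adhesion width at most `ℓ`, the graph `G` admits a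
rooted tree decomposition of width at most `w` and adhesion width at most `ℓ` whose
bags all come from the given per-node decompositions. -/
theorem stmt19 {V : Type} [Fintype V] [DecidableEq V] (G : SimpleGraph V)
    (a w l : ℕ) (hal : a ≤ l)
    (Dstar : RTD V G)
    (hclq : ∀ t, t ≠ Dstar.root →
      G.IsClique (↑(Dstar.bag t ∩ Dstar.bag (Dstar.parent t)) : Set V))
    (hadh : Dstar.adhesionLe a)
    (Dloc : ∀ t : Dstar.ι, RTDOn V G (Dstar.bag t))
    (hlw : ∀ t, (Dloc t).widthLe w) (hla : ∀ t, (Dloc t).adhesionLe l) :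
    ∃ D : RTD V G, D.widthLe w ∧ D.adhesionLe l ∧
      ∀ s : D.ι, ∃ (t : Dstar.ι) (s' : (Dloc t).ι), D.bag s = (Dloc t).bag s' := by
  have hσ : ∀ t, G.IsClique (Dstar.sigmaBag t : Set V) := fun t => by
    by_cases ht : t = Dstar.root
    · simp [RTDOn.sigmaBag, ht]
    · rw [Dstar.sigmaBag_of_ne_root ht]; exact hclq t ht
  choose r hr using fun t =>
    (Dloc t).exists_bag_superset_of_isClique (Dstar.sigmaBag_subset_bag t) (hσ t)
  choose up hup using fun t => (Dloc (Dstar.parent t)).exists_bag_superset_of_isClique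
    (Dstar.sigmaBag_subset_bag_parent t) (hσ t)
  let E t := (Dloc t).rerootAt (r t)
  refine ⟨RTDOn.glue (E := E) (up := up) hr hup, fun x => hlw x.1 x.2,
    RTDOn.adhesionLe_glue _ _ (fun t ht => (hadh t ht).trans hal) (fun t => (hla t).rerootAt _),
    fun x => ⟨x.1, x.2, rfl⟩⟩
end
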